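/- arXiv:1012.2816 — 2 statements merged into one kernel-verified Lean document; each statement's English description precedes it below -/
import Mathlib

section
/- Let n ≥ 1 and let h be a smooth complex-valued function on the open unit disk 𝔻. Then h satisfies the generalized Cauchy–Riemann equation ∂ⁿh/∂z̄ⁿ = 0 on 𝔻 if and only if there exist holomorphic functions h_0, …, h_{n−1} on 𝔻 such that h(z) = h_0(z) + h_1(z)·z̄ + ⋯ + h_{n−1}(z)·z̄^{n−1} for all z ∈ 𝔻. -/
open MeasureTheory Complex Metric

noncomputable section

/-- The open unit disk in `ℂ`. -/
def unitDisk : Set ℂ := Metric.ball (0 : ℂ) 1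

/-- The Wirtinger derivative `∂h/∂z̄ = (1/2)(∂h/∂x + i ∂h/∂y)`. -/
def wirtingerBar (h : ℂ → ℂ) (z : ℂ) : ℂ :=
  (1 / 2 : ℂ) * (fderiv ℝ h z 1 + Complex.I * fderiv ℝ h z Complex.I)

/-- `h` is `n`-analytic (polyanalytic of order `n`) on the unit disk. -/
def PolyAnalyticOn (n : ℕ) (h : ℂ → ℂ) : Prop :=
  ∃ g : Fin n → ℂ → ℂ, (∀ j, DifferentiableOn ℂ (g j) unitDisk) ∧
    ∀ z ∈ unitDisk, h z = ∑ j : Fin n, g j z * (starRingEnd ℂ z) ^ (j : ℕ)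

/-!
`∂/∂z̄` kills holomorphic functions and sends `g z̄ᵏ` (with `g` holomorphic) to `k g z̄ᵏ⁻¹`, so it
lowers the order of a polyanalytic function by one. Conversely, if `∂h/∂z̄ = ∑_{j<n} gⱼ z̄ʲ`, then
`H = ∑_{j<n} gⱼ z̄ʲ⁺¹ / (j + 1)` has the same `∂/∂z̄`, so `h - H` is holomorphic by the
Cauchy–Riemann equations and `h` is polyanalytic of order `n + 1`. Induction on `n` gives both
directions.
-/

open ComplexConjugate Topology

section Wirtinger

variable {f g : ℂ → ℂ} {z : ℂ}

theorem wirtingerBar_eq_of_hasFDerivAt {L : ℂ →L[ℝ] ℂ} (hL : HasFDerivAt f L z) :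
    wirtingerBar f z = (1 / 2 : ℂ) * (L 1 + I * L I) := by
  rw [wirtingerBar, hL.fderiv]

theorem Filter.EventuallyEq.wirtingerBar_eq (hfg : f =ᶠ[𝓝 z] g) :
    wirtingerBar f z = wirtingerBar g z := by
  rw [wirtingerBar, wirtingerBar, hfg.fderiv_eq]

theorem differentiableAt_complex_iff_wirtingerBar_eq_zero :
    DifferentiableAt ℂ f z ↔ DifferentiableAt ℝ f z ∧ wirtingerBar f z = 0 := by
  rw [differentiableAt_complex_iff_differentiableAt_real, wirtingerBar, smul_eq_mul]
  refine and_congr_right fun _ => ⟨fun h => ?_, fun h => ?_⟩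
  · linear_combination (I / 2) * h + fderiv ℝ f z 1 / 2 * I_sq
  · linear_combination (-2 * I) * h + fderiv ℝ f z I * I_sq

theorem wirtingerBar_sub (hf : DifferentiableAt ℝ f z) (hg : DifferentiableAt ℝ g z) :
    wirtingerBar (fun w => f w - g w) z = wirtingerBar f z - wirtingerBar g z := by
  rw [wirtingerBar_eq_of_hasFDerivAt (hf.hasFDerivAt.fun_sub hg.hasFDerivAt), wirtingerBar,
    wirtingerBar]
  simp only [sub_apply]
  ring

theorem wirtingerBar_mul (hf : DifferentiableAt ℝ f z) (hg : DifferentiableAt ℝ g z) :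
    wirtingerBar (fun w => f w * g w) z = wirtingerBar f z * g z + f z * wirtingerBar g z := by
  rw [wirtingerBar_eq_of_hasFDerivAt (hf.hasFDerivAt.fun_mul hg.hasFDerivAt), wirtingerBar,
    wirtingerBar]
  simp only [add_apply, smul_apply, smul_eq_mul]
  ring

theorem wirtingerBar_sum {ι : Type*} (s : Finset ι) {f : ι → ℂ → ℂ}
    (hf : ∀ i ∈ s, DifferentiableAt ℝ (f i) z) :
    wirtingerBar (fun w => ∑ i ∈ s, f i w) z = ∑ i ∈ s, wirtingerBar (f i) z := by
  rw [wirtingerBar_eq_of_hasFDerivAt (HasFDerivAt.fun_sum fun i hi => (hf i hi).hasFDerivAt)]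
  simp only [FunLike.coe_sum, Finset.sum_apply, Finset.mul_sum, ← Finset.sum_add_distrib]
  rfl

theorem DifferentiableAt.conj_comp (hg : DifferentiableAt ℂ g z) :
    DifferentiableAt ℝ (fun w => conj (g w)) z :=
  conjCLE.differentiableAt.comp z (hg.restrictScalars ℝ)

theorem wirtingerBar_conj_comp (hg : DifferentiableAt ℂ g z) :
    wirtingerBar (fun w => conj (g w)) z = conj (deriv g z) := by
  have hL : HasFDerivAt (fun w => conj (g w)) _ z :=
    conjCLE.hasFDerivAt.comp z (hg.hasFDerivAt.restrictScalars ℝ)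
  rw [wirtingerBar_eq_of_hasFDerivAt hL]
  simp only [ContinuousLinearMap.comp_apply, ContinuousLinearMap.coe_restrictScalars',
    fderiv_eq_smul_deriv, smul_eq_mul, one_mul, ContinuousLinearEquiv.coe_coe,
    ContinuousAlgEquiv.coeCLE_apply, conjCAE_apply, map_mul, conj_I]
  linear_combination (-(1 / 2) * conj (deriv g z)) * I_sq

theorem DifferentiableAt.mul_conj_pow (hg : DifferentiableAt ℂ g z) (k : ℕ) :
    DifferentiableAt ℝ (fun w => g w * conj w ^ k) z := by
  simp_rw [← map_pow]
  exact (hg.restrictScalars ℝ).mul (differentiableAt_pow k).conj_comp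

theorem wirtingerBar_mul_conj_pow (hg : DifferentiableAt ℂ g z) (k : ℕ) :
    wirtingerBar (fun w => g w * conj w ^ k) z = k * g z * conj z ^ (k - 1) := by
  have hp : DifferentiableAt ℂ (fun w : ℂ => w ^ k) z := differentiableAt_pow k
  simp_rw [← map_pow]
  rw [wirtingerBar_mul (hg.restrictScalars ℝ) hp.conj_comp, wirtingerBar_conj_comp hp,
    (differentiableAt_complex_iff_wirtingerBar_eq_zero.1 hg).2, deriv_pow_field]
  simp only [zero_mul, zero_add, map_mul, map_natCast]
  ring

theorem wirtingerBar_sum_mul_conj_pow {ι : Type*} (s : Finset ι) {g : ι → ℂ → ℂ} (k : ι → ℕ)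
    (hg : ∀ i ∈ s, DifferentiableAt ℂ (g i) z) :
    wirtingerBar (fun w => ∑ i ∈ s, g i w * conj w ^ k i) z =
      ∑ i ∈ s, k i * g i z * conj z ^ (k i - 1) := by
  rw [wirtingerBar_sum s fun i hi => (hg i hi).mul_conj_pow (k i)]
  exact Finset.sum_congr rfl fun i hi => wirtingerBar_mul_conj_pow (hg i hi) (k i)

end Wirtinger

theorem contDiffOn_wirtingerBar {s : Set ℂ} (hs : IsOpen s) {m : WithTop ℕ∞} {h : ℂ → ℂ}
    (hh : ContDiffOn ℝ (m + 1) h s) : ContDiffOn ℝ m (wirtingerBar h) s := by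
  have hderiv := hh.fderivWithin hs.uniqueDiffOn le_rfl
  have hsmooth : ContDiffOn ℝ m
      (fun z => (1 / 2 : ℂ) * (fderivWithin ℝ h s z 1 + I * fderivWithin ℝ h s z I)) s := by
    fun_prop
  refine hsmooth.congr fun z hz => ?_
  rw [wirtingerBar, fderivWithin_of_isOpen hs hz]

theorem isOpen_unitDisk : IsOpen unitDisk := isOpen_ball

section PolyAnalytic

variable {n : ℕ} {h : ℂ → ℂ}

theorem polyAnalyticOn_wirtingerBar (hp : PolyAnalyticOn (n + 1) h) :
    PolyAnalyticOn n (wirtingerBar h) := by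
  obtain ⟨g, hg, hh⟩ := hp
  refine ⟨fun j w => ((j : ℕ) + 1 : ℂ) * g j.succ w, fun j => (hg j.succ).const_mul _,
    fun z hz => ?_⟩
  have hgz j : DifferentiableAt ℂ (g j) z := (hg j).differentiableAt (isOpen_unitDisk.mem_nhds hz)
  rw [(Filter.eventuallyEq_of_mem (isOpen_unitDisk.mem_nhds hz) hh).wirtingerBar_eq,
    wirtingerBar_sum_mul_conj_pow _ _ fun j _ => hgz j, Fin.sum_univ_succ]
  simp

theorem PolyAnalyticOn.iterate_wirtingerBar_eq_zero (hp : PolyAnalyticOn n h) :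
    ∀ z ∈ unitDisk, (wirtingerBar^[n] h) z = 0 := by
  induction n generalizing h with
  | zero =>
    obtain ⟨g, -, hh⟩ := hp
    simpa using hh
  | succ n ih => simpa only [Function.iterate_succ_apply] using ih (polyAnalyticOn_wirtingerBar hp)

theorem polyAnalyticOn_succ_of_eq_add_sum {g₀ : ℂ → ℂ} {g : Fin n → ℂ → ℂ}
    (hg₀ : DifferentiableOn ℂ g₀ unitDisk) (hg : ∀ j, DifferentiableOn ℂ (g j) unitDisk)
    (hh : ∀ z ∈ unitDisk, h z = g₀ z + ∑ j : Fin n, g j z * conj z ^ ((j : ℕ) + 1)) :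
    PolyAnalyticOn (n + 1) h :=
  ⟨Fin.cons g₀ g, Fin.cases hg₀ hg, fun z hz => by simp [Fin.sum_univ_succ, hh z hz]⟩

theorem polyAnalyticOn_succ_of_wirtingerBar (hh : DifferentiableOn ℝ h unitDisk)
    (hp : PolyAnalyticOn n (wirtingerBar h)) : PolyAnalyticOn (n + 1) h := by
  obtain ⟨g, hg, hrep⟩ := hp
  set c : Fin n → ℂ → ℂ := fun j w => ((j : ℕ) + 1 : ℂ)⁻¹ * g j w
  have hc j : DifferentiableOn ℂ (c j) unitDisk := (hg j).const_mul _
  set H : ℂ → ℂ := fun w => ∑ j, c j w * conj w ^ ((j : ℕ) + 1)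
  have hsub : DifferentiableOn ℂ (fun w => h w - H w) unitDisk := by
    intro z hz
    have hcz j : DifferentiableAt ℂ (c j) z :=
      (hc j).differentiableAt (isOpen_unitDisk.mem_nhds hz)
    have hhz : DifferentiableAt ℝ h z := hh.differentiableAt (isOpen_unitDisk.mem_nhds hz)
    have hHz : DifferentiableAt ℝ H z :=
      DifferentiableAt.fun_sum fun j _ => (hcz j).mul_conj_pow _
    have hwH : wirtingerBar H z = wirtingerBar h z := by
      rw [wirtingerBar_sum_mul_conj_pow _ _ fun j _ => hcz j, hrep z hz]
      refine Finset.sum_congr rfl fun j _ => ?_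
      simp only [c, Nat.add_sub_cancel, Nat.cast_add_one]
      rw [mul_inv_cancel_left₀ (Nat.cast_add_one_ne_zero _)]
    refine (differentiableAt_complex_iff_wirtingerBar_eq_zero.2
      ⟨hhz.fun_sub hHz, ?_⟩).differentiableWithinAt
    rw [wirtingerBar_sub hhz hHz, hwH, sub_self]
  exact polyAnalyticOn_succ_of_eq_add_sum hsub hc fun z _ => by ring

theorem polyAnalyticOn_of_iterate_wirtingerBar_eq_zero
    (hh : ContDiffOn ℝ (⊤ : ℕ∞) h unitDisk) (h0 : ∀ z ∈ unitDisk, (wirtingerBar^[n] h) z = 0) :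
    PolyAnalyticOn n h := by
  induction n generalizing h with
  | zero => exact ⟨Fin.elim0, fun j => j.elim0, fun z hz => by simpa using h0 z hz⟩
  | succ n ih =>
    exact polyAnalyticOn_succ_of_wirtingerBar (hh.differentiableOn (by simp))
      (ih (contDiffOn_wirtingerBar isOpen_unitDisk (hh.of_le (by simp))) h0)

end PolyAnalytic

theorem polyanalytic_iff_iterated_wirtingerBar_eq_zero_general
    (n : ℕ) (h : ℂ → ℂ) (hsm : ContDiffOn ℝ (⊤ : ℕ∞) h unitDisk) :
    (∀ z ∈ unitDisk, (wirtingerBar^[n] h) z = 0) ↔ PolyAnalyticOn n h :=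
  ⟨polyAnalyticOn_of_iterate_wirtingerBar_eq_zero hsm, PolyAnalyticOn.iterate_wirtingerBar_eq_zero⟩

/-- a smooth function on the unit disk satisfies `∂ⁿh/∂z̄ⁿ = 0` there
if and only if it is `n`-analytic. -/
theorem polyanalytic_iff_iterated_wirtingerBar_eq_zero
    (n : ℕ) (hn : 1 ≤ n) (h : ℂ → ℂ) (hsm : ContDiffOn ℝ (⊤ : ℕ∞) h unitDisk) :
    (∀ z ∈ unitDisk, (wirtingerBar^[n] h) z = 0) ↔ PolyAnalyticOn n h :=
  polyanalytic_iff_iterated_wirtingerBar_eq_zero_general n h hsm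

end
end

section
/- Let n ≥ 1. For every ε > 0 there exists δ > 0 such that for all z, w ∈ 𝔻 with |φ_z(w)| < δ, one has |(1 − |w|²)·|k_z(w)| − n| < ε. In particular there is a number 0 < r < 1 such that (1 − |w|²)·|k_z(w)| > n/2 whenever |φ_z(w)| < r. -/
/-!
With `u = 1 - w z̄` and `ρ = |φ_z(w)| = |z - w| / |u|`, every term of the kernel sum is
`|u|^{2(n-1)}` times a term of the polynomial `P = bergProfile n`,
`P(t) = Σ_j (-1)^j C(n, j+1) C(n+j, n) t^{2j}`, so `|K_z(w)| = n |P(ρ)| / |u|²`. The identity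
`|u|² - |z - w|² = (1 - |z|²)(1 - |w|²)` then gives `(1 - |w|²)|k_z(w)| = (1 - ρ²)|P(ρ)|`,
a continuous function of `ρ` alone with value `P(0) = n` at `ρ = 0`.
-/

open MeasureTheory Complex Metric
open scoped ENNReal NNReal

noncomputable section

/-- The reproducing kernel `K_z(w)` of the `n`-analytic Bergman space `A²_n`. -/
def bergKernel (n : ℕ) (z w : ℂ) : ℂ :=
  ((n : ℂ) / (1 - w * (starRingEnd ℂ z)) ^ (2 * n)) *
    ∑ j ∈ Finset.range n,
      (-1 : ℂ) ^ j * (n.choose (j + 1) : ℂ) * ((n + j).choose n : ℂ) *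
        ((‖1 - w * (starRingEnd ℂ z)‖ : ℝ) : ℂ) ^ (2 * (n - 1 - j)) *
        ((‖w - z‖ : ℝ) : ℂ) ^ (2 * j)

/-- The normalized reproducing kernel `k_z = ((1 − |z|²)/n)·K_z` of `A²_n`. -/
def normKernel (n : ℕ) (z w : ℂ) : ℂ :=
  (((1 - ‖z‖ ^ 2) / n : ℝ) : ℂ) * bergKernel n z w

open ComplexConjugate

def bergProfile (n : ℕ) (t : ℝ) : ℝ :=
  ∑ j ∈ Finset.range n, (-1 : ℝ) ^ j * n.choose (j + 1) * (n + j).choose n * t ^ (2 * j)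

theorem bergProfile_zero (n : ℕ) : bergProfile n 0 = n := by
  cases n with
  | zero => simp [bergProfile]
  | succ m =>
    rw [bergProfile, Finset.sum_eq_single_of_mem 0 (by simp)]
    · simp
    · intro j _ hj
      simp [zero_pow (by omega : 2 * j ≠ 0)]

theorem continuous_bergProfile (n : ℕ) : Continuous (bergProfile n) := by
  unfold bergProfile
  fun_prop

theorem norm_one_sub_mul_conj_sq_sub_norm_sub_sq (z w : ℂ) :
    ‖1 - w * conj z‖ ^ 2 - ‖z - w‖ ^ 2 = (1 - ‖z‖ ^ 2) * (1 - ‖w‖ ^ 2) := by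
  simp only [Complex.sq_norm, normSq_apply, sub_re, sub_im, mul_re, mul_im, one_re, one_im,
    conj_re, conj_im]
  ring

theorem one_sub_mul_conj_ne_zero {z w : ℂ} (hz : ‖z‖ < 1) (hw : ‖w‖ < 1) :
    1 - w * conj z ≠ 0 := by
  have h : ‖w * conj z‖ < 1 := by
    rw [norm_mul, norm_conj]
    nlinarith [norm_nonneg w, norm_nonneg z]
  intro h0
  rw [← sub_eq_zero.mp h0, norm_one] at h
  exact lt_irrefl 1 h

theorem one_sub_norm_moebius_sq {z w : ℂ} (hu : 1 - w * conj z ≠ 0) :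
    1 - ‖(z - w) / (1 - w * conj z)‖ ^ 2
      = (1 - ‖z‖ ^ 2) * (1 - ‖w‖ ^ 2) / ‖1 - w * conj z‖ ^ 2 := by
  rw [← norm_one_sub_mul_conj_sq_sub_norm_sub_sq, norm_div]
  field_simp

theorem norm_bergKernel (n : ℕ) {z w : ℂ} (hu : 1 - w * conj z ≠ 0) :
    ‖bergKernel n z w‖
      = n * |bergProfile n ‖(z - w) / (1 - w * conj z)‖| / ‖1 - w * conj z‖ ^ 2 := by
  obtain rfl | hn := n.eq_zero_or_pos
  · simp [bergKernel]
  rw [bergKernel]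
  set u := 1 - w * conj z
  set ρ := ‖(z - w) / u‖ with hρ
  have hu' : 0 < ‖u‖ := norm_pos_iff.mpr hu
  have hzw : ‖w - z‖ = ρ * ‖u‖ := by
    rw [norm_sub_rev, hρ, norm_div, div_mul_cancel₀ _ hu'.ne']
  have hsum : (∑ j ∈ Finset.range n, (-1 : ℂ) ^ j * (n.choose (j + 1) : ℂ) *
      ((n + j).choose n : ℂ) * ((‖u‖ : ℝ) : ℂ) ^ (2 * (n - 1 - j)) *
        ((‖w - z‖ : ℝ) : ℂ) ^ (2 * j)) = ((‖u‖ ^ (2 * (n - 1)) * bergProfile n ρ : ℝ) : ℂ) := by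
    rw [bergProfile, Finset.mul_sum]
    push_cast
    refine Finset.sum_congr rfl fun j hj => ?_
    have hj : 2 * (n - 1) = 2 * (n - 1 - j) + 2 * j := by
      have := Finset.mem_range.mp hj
      omega
    rw [hzw, hj, pow_add]
    push_cast
    ring
  have h2n : ‖u‖ ^ (2 * n) = ‖u‖ ^ (2 * (n - 1)) * ‖u‖ ^ 2 := by
    rw [← pow_add]
    congr 1
    omega
  rw [hsum, norm_mul, norm_div, norm_pow, norm_real, Complex.norm_natCast,
    Real.norm_eq_abs, abs_mul, abs_pow, abs_of_pos hu', h2n]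
  field_simp

theorem one_sub_norm_sq_mul_norm_normKernel (n : ℕ) {z w : ℂ} (hz : ‖z‖ < 1) (hw : ‖w‖ < 1) :
    (1 - ‖w‖ ^ 2) * ‖normKernel n z w‖
      = (1 - ‖(z - w) / (1 - w * conj z)‖ ^ 2) *
          |bergProfile n ‖(z - w) / (1 - w * conj z)‖| := by
  have hu := one_sub_mul_conj_ne_zero hz hw
  have hz2 : 0 ≤ 1 - ‖z‖ ^ 2 := by nlinarith [norm_nonneg z]
  obtain rfl | hn := n.eq_zero_or_pos
  · simp [normKernel, bergProfile]
  rw [normKernel, norm_mul, norm_real, Real.norm_eq_abs, abs_div, abs_of_nonneg hz2,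
    Nat.abs_cast, norm_bergKernel n hu, one_sub_norm_moebius_sq hu]
  field_simp

theorem abs_one_sub_norm_sq_mul_norm_normKernel_sub_lt (n : ℕ) {ε : ℝ} (hε : 0 < ε) :
    ∃ δ : ℝ, 0 < δ ∧ ∀ z ∈ unitDisk, ∀ w ∈ unitDisk, ‖(z - w) / (1 - w * conj z)‖ < δ →
      |(1 - ‖w‖ ^ 2) * ‖normKernel n z w‖ - n| < ε := by
  have hG : ContinuousAt (fun t : ℝ => (1 - t ^ 2) * |bergProfile n t|) 0 := by
    have := continuous_bergProfile n
    fun_prop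
  obtain ⟨δ, hδ, hG⟩ := Metric.continuousAt_iff.mp hG ε hε
  refine ⟨δ, hδ, fun z hz w hw hρ => ?_⟩
  rw [unitDisk, mem_ball_zero_iff] at hz hw
  have := hG (x := ‖(z - w) / (1 - w * conj z)‖) (by simpa using hρ)
  simpa [Real.dist_eq, bergProfile_zero, one_sub_norm_sq_mul_norm_normKernel n hz hw] using this

/-- `(1 − |w|²)|k_z(w)| → n` uniformly as the pseudo-hyperbolic distance
`|φ_z(w)| → 0`; in particular `(1 − |w|²)|k_z(w)| > n/2` whenever `|φ_z(w)| < r`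
for some `0 < r < 1`. -/
theorem normKernel_near_diagonal (n : ℕ) (hn : 1 ≤ n) :
    (∀ ε : ℝ, 0 < ε → ∃ δ : ℝ, 0 < δ ∧ ∀ z ∈ unitDisk, ∀ w ∈ unitDisk,
      ‖(z - w) / (1 - w * (starRingEnd ℂ z))‖ < δ →
        |(1 - ‖w‖ ^ 2) * ‖normKernel n z w‖ - n| < ε) ∧
    (∃ r : ℝ, 0 < r ∧ r < 1 ∧ ∀ z ∈ unitDisk, ∀ w ∈ unitDisk,
      ‖(z - w) / (1 - w * (starRingEnd ℂ z))‖ < r →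
        (n : ℝ) / 2 < (1 - ‖w‖ ^ 2) * ‖normKernel n z w‖) := by
  refine ⟨fun ε hε => abs_one_sub_norm_sq_mul_norm_normKernel_sub_lt n hε, ?_⟩
  obtain ⟨δ, hδ, hclose⟩ := abs_one_sub_norm_sq_mul_norm_normKernel_sub_lt n
    (by positivity : (0 : ℝ) < n / 2)
  refine ⟨min δ (1 / 2), by positivity, min_lt_of_right_lt (by norm_num), fun z hz w hw hρ => ?_⟩
  have := abs_lt.mp (hclose z hz w hw (hρ.trans_le (min_le_left _ _)))
  linarith [this.1]

end
end
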